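/- Let σ be the sigmoid function and let f, g: X → [-V, V] with V ≥ 1. Then for any probability measure μ on X, E_μ[(f - g)²] ≤ (8·(V + V)·e^{2V})²·E_μ[(σ∘f - σ∘g)²]; more generally with f taking values in [-X₀,X₀] and g in [-Y₀,Y₀], Y₀ ≥ 1, the pointwise bound (f(x)-g(x))² ≤ 64(X₀+Y₀)²e^{4Y₀}(σ(f(x))-σ(g(x)))² holds for all x, and hence the same factor transfers to expectations. -/

import Mathlib

open MeasureTheory

noncomputable def sigmoid (x : ℝ) : ℝ := 1 / (1 + Real.exp (-x))

/-! The identity `σ a - σ b = σ a · σ (-b) · (1 - e^{-(a - b)})`, with `σ t ≥ e^{-|t|} / 2` and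
`1 - e^{-s} ≥ s / (1 + s)`, gives `|a - b| ≤ 4 e^{2|b|} (1 + |a - b|) |σ a - σ b|`: only the bound
on `b` enters the exponential, while the range of `a` costs the linear factor `1 + |a - b|`.
For the integrals, `σ` is `1/4`-Lipschitz, so `(σ ∘ f - σ ∘ g)²` is
integrable whenever `(f - g)²` is, and otherwise the left-hand integral is `0`. -/

theorem sigmoid_eq_real_sigmoid : sigmoid = Real.sigmoid :=
  funext fun _ => one_div _

namespace Real

theorem lipschitzWith_sigmoid : LipschitzWith 4⁻¹ sigmoid := by
  refine lipschitzWith_of_nnnorm_deriv_le differentiable_sigmoid fun x => ?_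
  have h0 : 0 ≤ sigmoid x := sigmoid_nonneg x
  have h1 : sigmoid x ≤ 1 := sigmoid_le_one x
  rw [← NNReal.coe_le_coe, coe_nnnorm, deriv_sigmoid, norm_of_nonneg (by nlinarith)]
  push_cast
  nlinarith [sq_nonneg (sigmoid x - 2⁻¹)]

theorem sq_sigmoid_sub_sigmoid_le (a b : ℝ) : (sigmoid a - sigmoid b) ^ 2 ≤ 16⁻¹ * (a - b) ^ 2 := by
  have h := lipschitzWith_sigmoid.dist_le_mul a b
  rw [dist_eq, dist_eq] at h
  push_cast at h
  calc (sigmoid a - sigmoid b) ^ 2 = |sigmoid a - sigmoid b| ^ 2 := (sq_abs _).symm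
    _ ≤ (4⁻¹ * |a - b|) ^ 2 := pow_le_pow_left₀ (abs_nonneg _) h 2
    _ = 16⁻¹ * (a - b) ^ 2 := by rw [mul_pow, sq_abs]; norm_num

theorem sigmoid_sub_sigmoid (a b : ℝ) :
    sigmoid a - sigmoid b = sigmoid a * sigmoid (-b) * (1 - exp (-(a - b))) := by
  simp only [sigmoid_def, neg_neg, neg_sub, exp_sub, exp_neg]
  field_simp
  ring

theorem div_one_add_le_one_sub_exp_neg {s : ℝ} (hs : -1 < s) : s / (1 + s) ≤ 1 - exp (-s) := by
  have h : exp (-s) * exp s = 1 := by rw [← exp_add, neg_add_cancel, exp_zero]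
  rw [div_le_iff₀ (by linarith)]
  nlinarith [add_one_le_exp s, exp_pos (-s)]

theorem exp_neg_abs_div_two_le_sigmoid (t : ℝ) : exp (-|t|) / 2 ≤ sigmoid t := by
  have h1 : exp (-t) ≤ exp |t| := exp_le_exp.2 (neg_le_abs t)
  have h2 : 1 ≤ exp |t| := one_le_exp (abs_nonneg t)
  rw [sigmoid_def, exp_neg, div_eq_mul_inv, ← mul_inv]
  exact inv_anti₀ (by positivity) (by linarith)

theorem sub_le_sigmoid_sub_sigmoid {a b : ℝ} (hab : b ≤ a) :
    a - b ≤ 4 * exp (2 * |b|) * (1 + (a - b)) * (sigmoid a - sigmoid b) := by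
  have hs : 0 ≤ a - b := sub_nonneg.2 hab
  have ha : exp (-|b|) / 2 ≤ sigmoid a :=
    (exp_neg_abs_div_two_le_sigmoid b).trans (sigmoid_le hab)
  have hb : exp (-|b|) / 2 ≤ sigmoid (-b) := by
    simpa only [abs_neg] using exp_neg_abs_div_two_le_sigmoid (-b)
  have hexp : exp (2 * |b|) * (exp (-|b|) / 2) ^ 2 = 4⁻¹ := by
    rw [div_pow, ← exp_nat_mul, ← mul_div_assoc, ← exp_add]; norm_num
  have key : (exp (-|b|) / 2) ^ 2 * ((a - b) / (1 + (a - b))) ≤ sigmoid a - sigmoid b := by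
    rw [sigmoid_sub_sigmoid, sq]
    have hσ : 0 ≤ sigmoid a * sigmoid (-b) := mul_nonneg (sigmoid_nonneg a) (sigmoid_nonneg _)
    exact mul_le_mul (mul_le_mul ha hb (by positivity) (sigmoid_nonneg a))
      (div_one_add_le_one_sub_exp_neg (by linarith)) (div_nonneg hs (by linarith)) hσ
  have h : (a - b) / (1 + (a - b)) ≤ 4 * exp (2 * |b|) * (sigmoid a - sigmoid b) := by
    calc (a - b) / (1 + (a - b))
        = 4 * (exp (2 * |b|) * (exp (-|b|) / 2) ^ 2) * ((a - b) / (1 + (a - b))) := by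
          rw [hexp]; ring
      _ ≤ 4 * exp (2 * |b|) * (sigmoid a - sigmoid b) := by
          rw [mul_assoc 4, mul_assoc, mul_assoc]; gcongr
  rw [div_le_iff₀ (by linarith)] at h
  linarith

theorem abs_sub_le_sigmoid_sub_sigmoid (a b : ℝ) :
    |a - b| ≤ 4 * exp (2 * |b|) * (1 + |a - b|) * |sigmoid a - sigmoid b| := by
  rcases le_total b a with hab | hab
  · have hσ : sigmoid b ≤ sigmoid a := sigmoid_le hab
    rw [abs_of_nonneg (sub_nonneg.2 hab), abs_of_nonneg (sub_nonneg.2 hσ)]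
    exact sub_le_sigmoid_sub_sigmoid hab
  · have hσ : sigmoid a ≤ sigmoid b := sigmoid_le hab
    have h := sub_le_sigmoid_sub_sigmoid (neg_le_neg hab)
    rw [sigmoid_neg, sigmoid_neg, abs_neg] at h
    rw [abs_of_nonpos (sub_nonpos.2 hab), abs_of_nonpos (sub_nonpos.2 hσ)]
    linarith

theorem sq_sub_le_mul_sq_sigmoid_sub_of_abs_le {a b X Y : ℝ} (hY : 1 ≤ Y) (ha : |a| ≤ X)
    (hb : |b| ≤ Y) :
    (a - b) ^ 2 ≤ 64 * (X + Y) ^ 2 * exp (4 * Y) * (sigmoid a - sigmoid b) ^ 2 := by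
  have hab : |a - b| ≤ X + Y := (abs_sub a b).trans (add_le_add ha hb)
  have hexp : exp (2 * |b|) ≤ exp (2 * Y) := exp_le_exp.2 (by linarith)
  have hK : 4 * exp (2 * |b|) * (1 + |a - b|) ≤ 8 * (X + Y) * exp (2 * Y) := by
    have : 1 + |a - b| ≤ 2 * (X + Y) := by linarith [abs_nonneg a]
    calc 4 * exp (2 * |b|) * (1 + |a - b|) ≤ 4 * exp (2 * Y) * (2 * (X + Y)) := by gcongr
      _ = 8 * (X + Y) * exp (2 * Y) := by ring
  have h : |a - b| ≤ 8 * (X + Y) * exp (2 * Y) * |sigmoid a - sigmoid b| :=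
    (abs_sub_le_sigmoid_sub_sigmoid a b).trans (by gcongr)
  calc (a - b) ^ 2 = |a - b| ^ 2 := (sq_abs _).symm
    _ ≤ (8 * (X + Y) * exp (2 * Y) * |sigmoid a - sigmoid b|) ^ 2 := by gcongr
    _ = 64 * (X + Y) ^ 2 * exp (4 * Y) * (sigmoid a - sigmoid b) ^ 2 := by
      rw [mul_pow, mul_pow, mul_pow, sq_abs, ← exp_nat_mul]; ring_nf

end Real

theorem integral_le_mul_integral_of_le_mul {α : Type*} [MeasurableSpace α] {μ : Measure α}
    {u v : α → ℝ} {C c : ℝ} (hC : 0 ≤ C) (hv : AEStronglyMeasurable v μ) (hv0 : 0 ≤ᵐ[μ] v)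
    (huv : ∀ᵐ x ∂μ, u x ≤ C * v x) (hvu : ∀ᵐ x ∂μ, v x ≤ c * u x) :
    ∫ x, u x ∂μ ≤ C * ∫ x, v x ∂μ := by
  by_cases hu : Integrable u μ
  · have hvi : Integrable v μ := by
      refine (hu.const_mul c).mono' hv ?_
      filter_upwards [hv0, hvu] with x hx hx' using by rwa [Real.norm_of_nonneg hx]
    calc ∫ x, u x ∂μ ≤ ∫ x, C * v x ∂μ := integral_mono_ae hu (hvi.const_mul C) huv
      _ = C * ∫ x, v x ∂μ := integral_const_mul C v
  · rw [integral_undef hu]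
    exact mul_nonneg hC (integral_nonneg_of_ae hv0)

theorem inverse_sigmoid_sq_general {X : Type*} [MeasurableSpace X] (μ : Measure X)
    (f g : X → ℝ) (X₀ Y₀ : ℝ) (hY₀ : 1 ≤ Y₀)
    (hf : ∀ x, |f x| ≤ X₀) (hg : ∀ x, |g x| ≤ Y₀)
    (hfm : Measurable f) (hgm : Measurable g) :
    (∀ x, (f x - g x) ^ 2 ≤
        64 * (X₀ + Y₀) ^ 2 * Real.exp (4 * Y₀) * (sigmoid (f x) - sigmoid (g x)) ^ 2) ∧
    (∫ x, (f x - g x) ^ 2 ∂μ ≤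
        64 * (X₀ + Y₀) ^ 2 * Real.exp (4 * Y₀) * ∫ x, (sigmoid (f x) - sigmoid (g x)) ^ 2 ∂μ) := by
  simp only [sigmoid_eq_real_sigmoid]
  have hpt x := Real.sq_sub_le_mul_sq_sigmoid_sub_of_abs_le hY₀ (hf x) (hg x)
  refine ⟨hpt, integral_le_mul_integral_of_le_mul (by positivity) ?_
    (.of_forall fun x => sq_nonneg _) (.of_forall hpt)
    (.of_forall fun x => Real.sq_sigmoid_sub_sigmoid_le _ _)⟩
  have hσ := continuous_sigmoid.measurable
  exact (((hσ.comp hfm).sub (hσ.comp hgm)).pow_const 2).aestronglyMeasurable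

/-- Squared/expectation version of the inverse-sigmoid-Lipschitz lemma: with f
bounded by X₀ and g bounded by Y₀ ≥ 1, squared reward differences are bounded
by 64(X₀+Y₀)²e^{4Y₀} times squared preference-probability differences, both
pointwise and in expectation. -/
theorem inverse_sigmoid_sq {X : Type*} [MeasurableSpace X] (μ : Measure X)
    [IsProbabilityMeasure μ] (f g : X → ℝ) (X₀ Y₀ : ℝ) (hX₀ : 0 ≤ X₀) (hY₀ : 1 ≤ Y₀)
    (hf : ∀ x, |f x| ≤ X₀) (hg : ∀ x, |g x| ≤ Y₀)
    (hfm : Measurable f) (hgm : Measurable g) :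
    (∀ x, (f x - g x) ^ 2 ≤
        64 * (X₀ + Y₀) ^ 2 * Real.exp (4 * Y₀) * (sigmoid (f x) - sigmoid (g x)) ^ 2) ∧
    (∫ x, (f x - g x) ^ 2 ∂μ ≤
        64 * (X₀ + Y₀) ^ 2 * Real.exp (4 * Y₀) * ∫ x, (sigmoid (f x) - sigmoid (g x)) ^ 2 ∂μ) :=
  inverse_sigmoid_sq_general μ f g X₀ Y₀ hY₀ hf hg hfm hgm
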